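/- Non-integrality of the Krawtchouk pseudoprobability polytope (Proposition 5.1): assume k₀ ≥ 2 and ℓ ≥ 1. Then there exists a function p from the subspaces of F^n to ℝ that is feasible for the distance-constrained pseudoprobability program at level ℓ and satisfies p(S) < 0 for some subspace S; in particular, the feasible polytope contains points that are not probability distributions (hence not convex combinations of true solutions). -/

import Mathlib

open Classical

noncomputable section

/-- A subspace `C ≤ F^n` has minimum distance at least `d` if every nonzero
codeword has Hamming weight at least `d`. -/
def MinDistGe (n d : ℕ) (F : Type) [Field F] [Fintype F]
    (C : Submodule F (Fin n → F)) : Prop :=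
  ∀ w ∈ C, w ≠ 0 → d ≤ hammingNorm w

/-- `k₀`: the maximum dimension of a subspace of `F^n` of minimum distance at
least `d`. -/
def kzero (n d : ℕ) (F : Type) [Field F] [Fintype F] : ℕ :=
  sSup {k : ℕ | ∃ C : Submodule F (Fin n → F), MinDistGe n d F C ∧ Module.finrank F C = k}

/-- Feasibility for the distance-constrained pseudoprobability program at level `ℓ`. -/
def PseudoFeasibleDist (n ℓ d : ℕ) (F : Type) [Field F] [Fintype F]
    (p : Submodule F (Fin n → F) → ℝ) : Prop :=
  (∑ S : Submodule F (Fin n → F), p S) = 1 ∧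
  (∀ S : Submodule F (Fin n → F), (∃ w ∈ S, w ≠ 0 ∧ hammingNorm w ≤ d - 1) → p S = 0) ∧
  (∀ U : Submodule F (Fin n → F),
      0 ≤ ∑ S : Submodule F (Fin n → F),
        if S ≤ U then (Fintype.card S : ℝ) ^ ℓ * p S else 0) ∧
  (∀ U : Submodule F (Fin n → F),
      0 ≤ ∑ S : Submodule F (Fin n → F), if U ≤ S then p S else 0)

/-!
Take a code `C` of dimension `k₀ ≥ 2` and a line `⊥ < L < C`. The signed measure
`p = δ_⊥ + ε (δ_C - δ_L)` with `ε = |L|^{-ℓ}` is negative at `L`, yet feasible: each constraint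
has the form `f ⊥ + ε (f C - f L) ≥ 0` for a weight `f`. The upward weights `f S = [U ≤ S]` are
monotone, and the downward weights `f S = [S ≤ U] |S|^ℓ` satisfy `f ⊥ = 1 ≥ ε f L` and `f C ≥ 0`.
-/

theorem Fintype.sum_mul_single_add_smul_sub_single {α : Type*} [Fintype α] [DecidableEq α]
    (f : α → ℝ) (a b c : α) (ε : ℝ) :
    ∑ x, f x * (Pi.single a 1 + ε • (Pi.single c 1 - Pi.single b 1) : α → ℝ) x =
      f a + ε * (f c - f b) := by
  simp [mul_add, mul_sub, Finset.sum_add_distrib, Pi.single_apply]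
  ring

namespace MinDistGe

variable {n d : ℕ} {F : Type} [Field F] [Fintype F] {C S : Submodule F (Fin n → F)}

theorem mono (hC : MinDistGe n d F C) (hSC : S ≤ C) : MinDistGe n d F S :=
  fun w hw => hC w (hSC hw)

theorem not_exists_weight_le (hC : MinDistGe n d F C) :
    ¬ ∃ w ∈ C, w ≠ 0 ∧ hammingNorm w ≤ d - 1 := by
  rintro ⟨w, hwC, hw0, hwd⟩
  have := hC w hwC hw0
  have := hammingNorm_pos_iff.mpr hw0
  omega

end MinDistGe

theorem exists_minDistGe_finrank_eq_kzero (n d : ℕ) (F : Type) [Field F] [Fintype F] :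
    ∃ C : Submodule F (Fin n → F), MinDistGe n d F C ∧ Module.finrank F C = kzero n d F := by
  have hbot : MinDistGe n d F ⊥ := fun w hw hw0 => absurd ((Submodule.mem_bot F).mp hw) hw0
  refine Nat.sSup_mem (s := {k | ∃ C : Submodule F (Fin n → F), MinDistGe n d F C ∧
    Module.finrank F C = k}) ⟨0, ⊥, hbot, finrank_bot F _⟩ ⟨n, ?_⟩
  rintro k ⟨C, -, rfl⟩
  exact (Submodule.finrank_le C).trans_eq (Module.finrank_fin_fun F)

theorem Submodule.exists_bot_lt_lt_of_two_le_finrank {K V : Type*} [DivisionRing K]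
    [AddCommGroup V] [Module K V] {C : Submodule K V} [FiniteDimensional K C]
    (hC : 2 ≤ Module.finrank K C) :
    ∃ L : Submodule K V, ⊥ < L ∧ L < C := by
  obtain ⟨v, hvC, hv0⟩ := (Submodule.ne_bot_iff C).mp (by rintro rfl; simp at hC)
  refine ⟨K ∙ v, bot_lt_iff_ne_bot.mpr (by simpa using hv0),
    lt_of_le_of_ne ((Submodule.span_singleton_le_iff_mem v C).mpr hvC) ?_⟩
  rintro h
  have := finrank_span_singleton (K := K) hv0
  rw [h] at this
  omega

section Witness

variable {K V : Type*} [Semiring K] [AddCommMonoid V] [Module K V]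

def nonintegralWitness (L C : Submodule K V) (ε : ℝ) : Submodule K V → ℝ :=
  Pi.single ⊥ 1 + ε • (Pi.single C 1 - Pi.single L 1)

theorem nonintegralWitness_apply_lt_zero {L C : Submodule K V} {ε : ℝ} (hL : ⊥ < L) (hLC : L < C)
    (hε : 0 < ε) : nonintegralWitness L C ε L < 0 := by
  simp [nonintegralWitness, hL.ne', hLC.ne, hε]

end Witness

theorem pseudoFeasibleDist_nonintegralWitness {n ℓ d : ℕ} {F : Type} [Field F] [Fintype F]
    {L C : Submodule F (Fin n → F)} {ε : ℝ} (hC : MinDistGe n d F C) (hLC : L ≤ C) (hε : 0 ≤ ε)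
    (hεL : ε * (Fintype.card L : ℝ) ^ ℓ ≤ 1) :
    PseudoFeasibleDist n ℓ d F (nonintegralWitness L C ε) := by
  have hsum (f : Submodule F (Fin n → F) → ℝ) :
      ∑ S, f S * nonintegralWitness L C ε S = f ⊥ + ε * (f C - f L) :=
    Fintype.sum_mul_single_add_smul_sub_single f ⊥ L C ε
  refine ⟨by simpa using hsum 1, ?_, fun U => ?_, fun U => ?_⟩
  · intro S hS
    have hne {T} (hT : T ≤ C) : S ≠ T := by
      rintro rfl
      exact (hC.mono hT).not_exists_weight_le hS
    simp [nonintegralWitness, hne bot_le, hne hLC, hne le_rfl]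
  · have hdown := hsum fun S => if S ≤ U then (Fintype.card S : ℝ) ^ ℓ else 0
    simp only [ite_zero_mul] at hdown
    rw [hdown]
    have hC0 : (0 : ℝ) ≤ if C ≤ U then (Fintype.card C : ℝ) ^ ℓ else 0 := by
      split_ifs <;> positivity
    have hL1 : ε * (if L ≤ U then (Fintype.card L : ℝ) ^ ℓ else 0) ≤ 1 := by
      split_ifs <;> simp [hεL]
    simp only [bot_le, if_true, Fintype.card_unique, Nat.cast_one, one_pow, mul_sub]
    linarith [mul_nonneg hε hC0]
  · have hup := hsum fun S => if U ≤ S then 1 else 0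
    simp only [boole_mul] at hup
    rw [hup]
    have hmono : (if U ≤ L then (1 : ℝ) else 0) ≤ if U ≤ C then 1 else 0 := by
      by_cases hUL : U ≤ L
      · simp [hUL, hUL.trans hLC]
      · simp only [hUL, if_false]
        positivity
    have hbot : (0 : ℝ) ≤ if U ≤ ⊥ then 1 else 0 := by positivity
    nlinarith

theorem kraw_polytope_not_integral_general
    (n ℓ d : ℕ)
    (F : Type) [Field F] [Fintype F]
    (hk : 2 ≤ kzero n d F) :
    ∃ p : Submodule F (Fin n → F) → ℝ, PseudoFeasibleDist n ℓ d F p ∧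
      ∃ S : Submodule F (Fin n → F), p S < 0 := by
  obtain ⟨C, hC, hCk⟩ := exists_minDistGe_finrank_eq_kzero n d F
  obtain ⟨L, hL, hLC⟩ := Submodule.exists_bot_lt_lt_of_two_le_finrank (hCk ▸ hk)
  have hcard : (0 : ℝ) < (Fintype.card L : ℝ) ^ ℓ := by
    have : 0 < Fintype.card L := Fintype.card_pos
    positivity
  exact ⟨nonintegralWitness L C ((Fintype.card L : ℝ) ^ ℓ)⁻¹,
    pseudoFeasibleDist_nonintegralWitness hC hLC.le (inv_nonneg.2 hcard.le)
      (inv_mul_cancel₀ hcard.ne').le,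
    L, nonintegralWitness_apply_lt_zero hL hLC (inv_pos.2 hcard)⟩

/-- **Non-integrality of the Krawtchouk pseudoprobability polytope
(Proposition 5.1).** If `k₀ ≥ 2` and `ℓ ≥ 1`, there is a feasible solution of
the distance-constrained pseudoprobability program at level `ℓ` taking a
negative value at some subspace. -/
theorem kraw_polytope_not_integral
    (n ℓ d : ℕ) (hn : 1 ≤ n) (hd : 1 ≤ d) (hdn : d ≤ n) (hl : 1 ≤ ℓ)
    (F : Type) [Field F] [Fintype F]
    (hk : 2 ≤ kzero n d F) :
    ∃ p : Submodule F (Fin n → F) → ℝ, PseudoFeasibleDist n ℓ d F p ∧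
      ∃ S : Submodule F (Fin n → F), p S < 0 :=
  kraw_polytope_not_integral_general n ℓ d F hk
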